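/- Let M = A + W − σ·v·vᵀ be an n×n generalized modularity matrix and let S₁,…,S_k (k ≥ 1) be pairwise disjoint nonempty subsets of {1,…,n} such that for every i, 𝟙_{S_i}ᵀ A 𝟙_{S_i} + 𝟙_{S_i}ᵀ W 𝟙_{S_i} > Σ_{j≠i} 𝟙_{S_i}ᵀ A 𝟙_{S_j}. Then M has at least k−1 positive eigenvalues (counted with multiplicity). -/

import Mathlib

open Matrix BigOperators

/-- A nonnegative square matrix is irreducible if for every pair of indices `(i, j)`
there is a positive power `k` with `(A ^ k) i j > 0`. -/
def Matrix.Irreducible {n : ℕ} (A : Matrix (Fin n) (Fin n) ℝ) : Prop :=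
  ∀ i j, ∃ k : ℕ, 0 < k ∧ 0 < (A ^ k) i j

/-- The characteristic vector `𝟙_S` of a set of indices. -/
noncomputable def charVec {n : ℕ} (S : Finset (Fin n)) : Fin n → ℝ :=
  fun i => if i ∈ S then 1 else 0

/-- The (joint) modularity `Q(S,T) = 𝟙_Sᵀ M 𝟙_T`; the modularity of `S` is `Q(S,S)`. -/
noncomputable def modQ {n : ℕ} (M : Matrix (Fin n) (Fin n) ℝ)
    (S T : Finset (Fin n)) : ℝ :=
  charVec S ⬝ᵥ (M *ᵥ charVec T)

/-- The number of positive eigenvalues (with multiplicity) of a real symmetric matrix. -/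
noncomputable def posEigCount {n : ℕ} (X : Matrix (Fin n) (Fin n) ℝ)
    (hX : X.IsHermitian) : ℕ :=
  (Finset.univ.filter (fun i => 0 < hX.eigenvalues i)).card

/-- The number of nonnegative eigenvalues (with multiplicity) of a real symmetric matrix. -/
noncomputable def nonnegEigCount {n : ℕ} (X : Matrix (Fin n) (Fin n) ℝ)
    (hX : X.IsHermitian) : ℕ :=
  (Finset.univ.filter (fun i => 0 ≤ hX.eigenvalues i)).card

/-! Put `B = A + W`. In the coordinates `c ↦ ∑ c_i 𝟙_{S_i}`, the quadratic form of `B` has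
Gram matrix `N_ij = 𝟙_{S_i}ᵀ B 𝟙_{S_j}`. Since `W` is diagonal and the `S_i` are disjoint, the
off-diagonal entries are `𝟙_{S_i}ᵀ A 𝟙_{S_j} ≥ 0`, so the hypothesis says exactly that `N` is
strictly diagonally dominant, hence positive definite by Gershgorin. On the hyperplane
`v ⬝ᵥ x = 0` the rank-one term vanishes and `M` agrees with `B`, so `M` is positive on a subspace
of dimension at least `k - 1`. Expanding the quadratic form in an orthonormal eigenbasis shows
that a vector of such a subspace is determined by its coordinates along the eigenvectors with
positive eigenvalue, which bounds the dimension by the number of positive eigenvalues. -/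

theorem LinearMap.finrank_sub_one_le_finrank_ker {K E : Type*} [Field K] [AddCommGroup E]
    [Module K E] [FiniteDimensional K E] (f : E →ₗ[K] K) :
    Module.finrank K E - 1 ≤ Module.finrank K (LinearMap.ker f) := by
  have hrange : Module.finrank K (LinearMap.range f) ≤ 1 := by
    simpa using (LinearMap.range f).finrank_le
  have := f.finrank_range_add_finrank_ker
  omega

theorem Matrix.IsSymm.mulVec_dotProduct {ι : Type*} [Fintype ι] {M : Matrix ι ι ℝ}
    (hM : M.IsSymm) (x y : ι → ℝ) : M *ᵥ x ⬝ᵥ y = x ⬝ᵥ M *ᵥ y := by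
  rw [dotProduct_mulVec, ← vecMul_transpose, hM.eq]

theorem Matrix.dotProduct_mulVec_sub_smul_vecMulVec {ι : Type*} [Fintype ι]
    (B : Matrix ι ι ℝ) (σ : ℝ) (v x : ι → ℝ) :
    x ⬝ᵥ (B - σ • vecMulVec v v) *ᵥ x = x ⬝ᵥ B *ᵥ x - σ * (v ⬝ᵥ x) ^ 2 := by
  rw [sub_mulVec, smul_mulVec, vecMulVec_mulVec, dotProduct_sub, dotProduct_smul,
    dotProduct_smul, dotProduct_comm x v]
  simp only [MulOpposite.smul_eq_mul_unop, MulOpposite.unop_op, smul_eq_mul]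
  ring

theorem Matrix.dotProduct_transpose_mul_mul_mulVec {ι κ : Type*} [Fintype ι] [Fintype κ]
    (B : Matrix ι ι ℝ) (C : Matrix ι κ ℝ) (c : κ → ℝ) :
    c ⬝ᵥ (Cᵀ * B * C) *ᵥ c = C *ᵥ c ⬝ᵥ B *ᵥ (C *ᵥ c) := by
  rw [← mulVec_mulVec, ← mulVec_mulVec, dotProduct_mulVec, vecMul_transpose]

theorem Matrix.posDef_of_sum_abs_lt_diag {ι : Type*} [Fintype ι] [DecidableEq ι]
    {N : Matrix ι ι ℝ} (hN : N.IsHermitian)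
    (hdom : ∀ i, ∑ j ∈ Finset.univ.erase i, |N i j| < N i i) : N.PosDef := by
  refine hN.posDef_iff_eigenvalues_pos.mpr fun i => ?_
  have hμ : Module.End.HasEigenvalue (toLin' N) (hN.eigenvalues i) := by
    rw [Module.End.hasEigenvalue_iff_mem_spectrum, spectrum_toLin']
    exact hN.eigenvalues_mem_spectrum_real i
  obtain ⟨j, hj⟩ := eigenvalue_mem_ball hμ
  rw [Metric.mem_closedBall, Real.dist_eq] at hj
  simp only [Real.norm_eq_abs] at hj
  linarith [(abs_sub_le_iff.mp hj).2, hdom j]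

theorem Matrix.IsHermitian.dotProduct_mulVec_self_eq_sum {ι : Type*} [Fintype ι] [DecidableEq ι]
    {M : Matrix ι ι ℝ} (hM : M.IsHermitian) (x : ι → ℝ) :
    x ⬝ᵥ M *ᵥ x = ∑ i, hM.eigenvalues i * (⇑(hM.eigenvectorBasis i) ⬝ᵥ x) ^ 2 := by
  have h := hM.eigenvectorBasis.sum_inner_mul_inner (WithLp.toLp 2 x) (WithLp.toLp 2 (M *ᵥ x))
  simp only [EuclideanSpace.inner_eq_star_dotProduct, star_trivial] at h
  rw [dotProduct_comm, ← h]
  refine Finset.sum_congr rfl fun i _ => ?_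
  rw [(isHermitian_iff_isSymm.mp hM).mulVec_dotProduct, hM.mulVec_eigenvectorBasis,
    dotProduct_smul, smul_eq_mul, dotProduct_comm]
  ring

theorem finrank_le_posEigCount_of_dotProduct_mulVec_pos {n : ℕ} {M : Matrix (Fin n) (Fin n) ℝ}
    (hM : M.IsHermitian) {E : Type*} [AddCommGroup E] [Module ℝ E]
    (L : E →ₗ[ℝ] Fin n → ℝ) (U : Submodule ℝ E)
    (hU : ∀ u ∈ U, u ≠ 0 → 0 < L u ⬝ᵥ M *ᵥ L u) :
    Module.finrank ℝ U ≤ posEigCount M hM := by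
  set P := Finset.univ.filter fun i => 0 < hM.eigenvalues i
  let R : Matrix P (Fin n) ℝ := of fun i => hM.eigenvectorBasis i
  have hinj : Function.Injective (R.mulVecLin ∘ₗ L ∘ₗ U.subtype) := by
    rw [← LinearMap.ker_eq_bot, LinearMap.ker_eq_bot']
    intro u hu
    by_contra hne
    refine (hU u u.2 (by simpa using hne)).not_ge ?_
    rw [hM.dotProduct_mulVec_self_eq_sum]
    refine Finset.sum_nonpos fun i _ => ?_
    by_cases hi : 0 < hM.eigenvalues i
    · have hcoord : ⇑(hM.eigenvectorBasis i) ⬝ᵥ L u = 0 :=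
        congrFun hu ⟨i, Finset.mem_filter.mpr ⟨Finset.mem_univ i, hi⟩⟩
      simp [hcoord]
    · exact mul_nonpos_of_nonpos_of_nonneg (not_lt.mp hi) (sq_nonneg _)
  simpa [posEigCount] using LinearMap.finrank_le_finrank_of_injective hinj

theorem modQ_add {n : ℕ} (A W : Matrix (Fin n) (Fin n) ℝ) (S T : Finset (Fin n)) :
    modQ (A + W) S T = modQ A S T + modQ W S T := by
  simp only [modQ, add_mulVec, dotProduct_add]

theorem modQ_nonneg {n : ℕ} {A : Matrix (Fin n) (Fin n) ℝ} (hA : ∀ i j, 0 ≤ A i j)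
    (S T : Finset (Fin n)) : 0 ≤ modQ A S T := by
  have hχ : ∀ U : Finset (Fin n), 0 ≤ charVec U := fun U a => by
    unfold charVec; positivity
  exact dotProduct_nonneg_of_nonneg (hχ S) fun a =>
    dotProduct_nonneg_of_nonneg (fun b => hA a b) (hχ T)

theorem modQ_eq_zero_of_isDiag {n : ℕ} {W : Matrix (Fin n) (Fin n) ℝ} (hW : W.IsDiag)
    {S T : Finset (Fin n)} (hST : Disjoint S T) : modQ W S T = 0 := by
  rw [modQ, ← hW.diagonal_diag]
  refine Finset.sum_eq_zero fun a _ => ?_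
  by_cases haS : a ∈ S
  · simp [charVec, mulVec_diagonal, Finset.disjoint_left.mp hST haS]
  · simp [charVec, haS]

noncomputable def charMatrix {n k : ℕ} (S : Fin k → Finset (Fin n)) :
    Matrix (Fin n) (Fin k) ℝ :=
  of fun a i => charVec (S i) a

theorem transpose_charMatrix_mul_mul_apply {n k : ℕ} (B : Matrix (Fin n) (Fin n) ℝ)
    (S : Fin k → Finset (Fin n)) (i j : Fin k) :
    ((charMatrix S)ᵀ * B * charMatrix S) i j = modQ B (S i) (S j) := by
  simp only [charMatrix, modQ, mul_apply, transpose_apply, of_apply, dotProduct, mulVec,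
    Finset.mul_sum, Finset.sum_mul, mul_assoc]
  exact Finset.sum_comm

theorem posDef_transpose_charMatrix_mul_mul {n k : ℕ} {A W : Matrix (Fin n) (Fin n) ℝ}
    (hA : A.IsHermitian) (hApos : ∀ i j, 0 ≤ A i j) (hW : W.IsDiag)
    {S : Fin k → Finset (Fin n)} (hSdisj : ∀ i j, i ≠ j → Disjoint (S i) (S j))
    (hdom : ∀ i, ∑ j ∈ Finset.univ.erase i, modQ A (S i) (S j) <
      modQ A (S i) (S i) + modQ W (S i) (S i)) :
    ((charMatrix S)ᵀ * (A + W) * charMatrix S).PosDef := by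
  have hB : (A + W).IsHermitian := hA.add (isHermitian_iff_isSymm.mpr hW.isSymm)
  have hoff : ∀ i j, i ≠ j →
      |((charMatrix S)ᵀ * (A + W) * charMatrix S) i j| = modQ A (S i) (S j) := fun i j hij => by
    rw [transpose_charMatrix_mul_mul_apply, modQ_add, modQ_eq_zero_of_isDiag hW (hSdisj i j hij),
      add_zero, abs_of_nonneg (modQ_nonneg hApos _ _)]
  refine posDef_of_sum_abs_lt_diag
    (by simpa [conjTranspose_eq_transpose_of_trivial] using
      isHermitian_conjTranspose_mul_mul (charMatrix S) hB) fun i => ?_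
  rw [Finset.sum_congr rfl fun j hj => hoff i j (Finset.ne_of_mem_erase hj).symm,
    transpose_charMatrix_mul_mul_apply, modQ_add]
  exact hdom i

theorem stmt12_general {n k : ℕ} (A W M : Matrix (Fin n) (Fin n) ℝ)
    (hA : A.IsHermitian) (hApos : ∀ i j, 0 ≤ A i j)
    (hW : W.IsDiag) (v : Fin n → ℝ)
    (σ : ℝ)
    (hMdef : M = A + W - σ • vecMulVec v v) (hM : M.IsHermitian)
    (S : Fin k → Finset (Fin n))
    (hSdisj : ∀ i j, i ≠ j → Disjoint (S i) (S j))
    (hdom : ∀ i,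
      (∑ j ∈ Finset.univ.erase i, charVec (S i) ⬝ᵥ (A *ᵥ charVec (S j))) <
        charVec (S i) ⬝ᵥ (A *ᵥ charVec (S i)) +
        charVec (S i) ⬝ᵥ (W *ᵥ charVec (S i))) :
    k - 1 ≤ posEigCount M hM := by
  set C := charMatrix S
  have hgram : (Cᵀ * (A + W) * C).PosDef :=
    posDef_transpose_charMatrix_mul_mul hA hApos hW hSdisj hdom
  set f := dotProductBilin ℝ ℝ v ∘ₗ C.mulVecLin
  have hpos : ∀ c ∈ LinearMap.ker f, c ≠ 0 → 0 < C.mulVecLin c ⬝ᵥ M *ᵥ C.mulVecLin c :=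
    fun c hc hc0 => by
      have hvc : v ⬝ᵥ C *ᵥ c = 0 := LinearMap.mem_ker.mp hc
      rw [mulVecLin_apply, hMdef, dotProduct_mulVec_sub_smul_vecMulVec, hvc,
        ← dotProduct_transpose_mul_mul_mulVec]
      simpa using hgram.dotProduct_mulVec_pos hc0
  calc k - 1 ≤ Module.finrank ℝ (LinearMap.ker f) := by
        simpa using f.finrank_sub_one_le_finrank_ker
    _ ≤ posEigCount M hM := finrank_le_posEigCount_of_dotProduct_mulVec_pos hM C.mulVecLin _ hpos

theorem stmt12 {n k : ℕ} (hk : 1 ≤ k) (A W M : Matrix (Fin n) (Fin n) ℝ)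
    (hA : A.IsHermitian) (hApos : ∀ i j, 0 ≤ A i j) (hAirr : A.Irreducible)
    (hW : W.IsDiag) (v : Fin n → ℝ) (hv : v ≠ 0) (hvpos : ∀ i, 0 ≤ v i)
    (σ : ℝ) (hσ : 0 < σ)
    (hMdef : M = A + W - σ • vecMulVec v v) (hM : M.IsHermitian)
    (S : Fin k → Finset (Fin n)) (hSne : ∀ i, (S i).Nonempty)
    (hSdisj : ∀ i j, i ≠ j → Disjoint (S i) (S j))
    (hdom : ∀ i,
      (∑ j ∈ Finset.univ.erase i, charVec (S i) ⬝ᵥ (A *ᵥ charVec (S j))) <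
        charVec (S i) ⬝ᵥ (A *ᵥ charVec (S i)) +
        charVec (S i) ⬝ᵥ (W *ᵥ charVec (S i))) :
    k - 1 ≤ posEigCount M hM :=
  stmt12_general A W M hA hApos hW v σ hMdef hM S hSdisj hdom
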